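/- Let k be odd. Every weighted graph G of order n ≥ k admits a k-partition (X₁,…,X_k) with w(X₁,…,X_k) ≥ ((k−1)/k)·w(G) + ((k−1)/(2k))·(1 − (k−3)/(4(n−1)))·d_w(G). In particular, for k = 3 the lower-order correction vanishes and the bound is (2/3)·w(G) + d_w(G)/3. -/

import Mathlib

open Finset

/-- Total weight of the graph: half the sum of `w u v` over ordered pairs. -/
noncomputable def totalW {V : Type} [Fintype V] (w : V → V → ℝ) : ℝ := (∑ u, ∑ v, w u v) / 2

/-- Weight of the cut between `X` and `Y`. -/
noncomputable def cutW {V : Type} (w : V → V → ℝ) (X Y : Finset V) : ℝ := ∑ u ∈ X, ∑ v ∈ Y, w u v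

/-- Weight of the edges inside `S`. -/
noncomputable def insideW {V : Type} (w : V → V → ℝ) (S : Finset V) : ℝ := (∑ u ∈ S, ∑ v ∈ S, w u v) / 2

/-- Weighted degree of a vertex. -/
noncomputable def wdeg {V : Type} [Fintype V] (w : V → V → ℝ) (v : V) : ℝ := ∑ u, w v u

/-- Maximum weighted degree. -/
noncomputable def maxDeg {V : Type} [Fintype V] (w : V → V → ℝ) : ℝ := ⨆ v, wdeg w v

/-- Weight from `v` into the set `S`. -/
noncomputable def wS {V : Type} (w : V → V → ℝ) (S : Finset V) (v : V) : ℝ := ∑ x ∈ S, w v x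

/-- Total cross-part weight of a `k`-partition. -/
noncomputable def kcutW {V : Type} (w : V → V → ℝ) {k : ℕ} (X : Fin k → Finset V) : ℝ :=
  (∑ i, ∑ j, if i = j then 0 else cutW w (X i) (X j)) / 2

/-- `X` is a partition of `V` into `k` nonempty pairwise disjoint parts. -/
def IsPartition {V : Type} {k : ℕ} (X : Fin k → Finset V) : Prop :=
  (∀ i, (X i).Nonempty) ∧ (∀ i j, i ≠ j → Disjoint (X i) (X j)) ∧ (∀ v, ∃ i, v ∈ X i)

/-! Start from a balanced `k`-colouring of `V`, with classes of sizes `q = ⌊n/k⌋` or `q + 1`, and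
relabel the vertices by a uniformly random permutation. Since `Perm V` is transitive on ordered
pairs of distinct vertices, each edge becomes monochromatic with probability `m / (n (n - 1))`,
where `m` counts the ordered monochromatic pairs of distinct vertices; hence some relabelling
leaves at most that fraction of `w(G)` inside the classes. For class sizes `q` or `q + 1` one has
`m + n = ∑ sᵢ²` and `4 k ∑ sᵢ² = 4 n² + k² - (2 n - (2 q + 1) k)²`, and for odd `k` the last square
is at least `1`, which is exactly the bound claimed. -/

section Colouring

variable {V ι : Type} [Fintype V] [DecidableEq ι]

noncomputable def monoW (w : V → V → ℝ) (c : V → ι) : ℝ :=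
  ∑ u, ∑ v, if c u = c v then w u v else 0

lemma sum_fibres_eq {M : Type} [AddCommMonoid M] [Fintype ι] (c : V → ι) (f : ι → V → M) :
    ∑ i, ∑ u ∈ {u | c u = i}, f i u = ∑ u, f (c u) u := by
  rw [← Finset.sum_fiberwise univ c (fun u => f (c u) u)]
  refine Finset.sum_congr rfl fun i _ => Finset.sum_congr rfl fun u hu => ?_
  rw [(Finset.mem_filter.1 hu).2]

lemma kcutW_fibres (w : V → V → ℝ) {k : ℕ} (c : V → Fin k) :
    kcutW w (fun i => {v | c v = i}) = totalW w - monoW w c / 2 := by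
  have hall : ∑ i, ∑ j, cutW w {v | c v = i} {v | c v = j} = ∑ u, ∑ v, w u v := by
    simp only [cutW]
    rw [← sum_fibres_eq c (fun _ u => ∑ v, w u v)]
    refine Finset.sum_congr rfl fun i _ => ?_
    rw [Finset.sum_comm]
    exact Finset.sum_congr rfl fun u _ => sum_fibres_eq c (fun _ v => w u v)
  have hsame : ∑ i, cutW w {v | c v = i} {v | c v = i} = monoW w c := by
    simp only [cutW, monoW, ← Finset.sum_filter]
    exact sum_fibres_eq c (fun i u => ∑ v ∈ {v | c v = i}, w u v) |>.trans
      (Finset.sum_congr rfl fun u _ => by simp only [eq_comm])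
  have hsplit (i j : Fin k) : (if i = j then 0 else cutW w {v | c v = i} {v | c v = j})
      = cutW w {v | c v = i} {v | c v = j}
        - if i = j then cutW w {v | c v = i} {v | c v = j} else 0 := by
    split_ifs <;> simp
  simp only [kcutW, totalW, hsplit, Finset.sum_sub_distrib, Finset.sum_ite_eq, Finset.mem_univ,
    if_true, hall, hsame]
  ring

lemma isPartition_fibres {k : ℕ} {c : V → Fin k} (hc : Function.Surjective c) :
    IsPartition (fun i => ({v | c v = i} : Finset V)) := by
  refine ⟨fun i => ?_, fun i j hij => ?_, fun v => ⟨c v, by simp⟩⟩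
  · obtain ⟨v, rfl⟩ := hc i
    exact ⟨v, by simp⟩
  · exact Finset.disjoint_filter.2 fun v _ hi hj => hij (hi ▸ hj)

end Colouring

section Averaging

variable {V : Type} [Fintype V] [DecidableEq V]

lemma Equiv.Perm.sum_apply_pair_eq {M : Type} [AddCommMonoid M] (F : V → V → M) {u v u' v' : V}
    (huv : u ≠ v) (huv' : u' ≠ v') :
    ∑ σ : Equiv.Perm V, F (σ u) (σ v) = ∑ σ : Equiv.Perm V, F (σ u') (σ v') := by
  obtain ⟨τ, hτ⟩ := Equiv.Perm.exists_extending_pair ![u', v'] ![u, v]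
    (injective_pair_iff_ne.2 huv') (injective_pair_iff_ne.2 huv)
  have hu : τ u' = u := hτ 0
  have hv : τ v' = v := hτ 1
  calc ∑ σ : Equiv.Perm V, F (σ u) (σ v)
      = ∑ σ : Equiv.Perm V, F ((σ * τ) u') ((σ * τ) v') := by
        simp only [Equiv.Perm.mul_apply, hu, hv]
    _ = ∑ σ : Equiv.Perm V, F (σ u') (σ v') :=
        Fintype.sum_equiv (Equiv.mulRight τ) _ _ fun _ => rfl

lemma Equiv.Perm.card_offDiag_nsmul_sum_apply_pair {M : Type} [AddCommMonoid M]
    (F : V → V → M) {u v : V} (huv : u ≠ v) :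
    #(univ : Finset V).offDiag • ∑ σ : Equiv.Perm V, F (σ u) (σ v)
      = (Fintype.card V).factorial • ∑ p ∈ (univ : Finset V).offDiag, F p.1 p.2 := by
  have hrelabel (σ : Equiv.Perm V) :
      ∑ p ∈ (univ : Finset V).offDiag, F (σ p.1) (σ p.2)
        = ∑ p ∈ (univ : Finset V).offDiag, F p.1 p.2 :=
    Finset.sum_equiv (σ.prodCongr σ) (fun p => by simp [σ.injective.ne_iff]) fun _ _ => rfl
  calc #(univ : Finset V).offDiag • ∑ σ : Equiv.Perm V, F (σ u) (σ v)
      = ∑ p ∈ (univ : Finset V).offDiag, ∑ σ : Equiv.Perm V, F (σ p.1) (σ p.2) := by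
        rw [← Finset.sum_const]
        exact Finset.sum_congr rfl fun p hp =>
          Equiv.Perm.sum_apply_pair_eq F huv (Finset.mem_offDiag.1 hp).2.2
    _ = ∑ σ : Equiv.Perm V, ∑ p ∈ (univ : Finset V).offDiag, F p.1 p.2 := by
        rw [Finset.sum_comm]
        exact Finset.sum_congr rfl fun σ _ => hrelabel σ
    _ = (Fintype.card V).factorial • ∑ p ∈ (univ : Finset V).offDiag, F p.1 p.2 := by
        rw [Finset.sum_const, Finset.card_univ, Fintype.card_perm]

variable {ι : Type} [DecidableEq ι]

def monoPairs (c : V → ι) : ℕ := #{p ∈ (univ : Finset V).offDiag | c p.1 = c p.2}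

lemma monoPairs_add_card [Fintype ι] (c : V → ι) :
    monoPairs c + Fintype.card V = ∑ i, #{v | c v = i} ^ 2 := by
  set S : Finset (V × V) := {p ∈ univ ×ˢ univ | c p.1 = c p.2} with hSdef
  have hS : #S = ∑ i, #{v | c v = i} ^ 2 := by
    rw [Finset.card_eq_sum_card_fiberwise (f := fun p => c p.1) (t := univ) fun _ _ => mem_univ _]
    refine Finset.sum_congr rfl fun i _ => ?_
    rw [sq, ← Finset.card_product]
    congr 1
    ext ⟨a, b⟩
    simp only [S, Finset.mem_filter, Finset.mem_product, Finset.mem_univ, true_and]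
    constructor
    · rintro ⟨hab, rfl⟩; exact ⟨rfl, hab.symm⟩
    · rintro ⟨rfl, hb⟩; exact ⟨hb.symm, rfl⟩
  have hsplit : S = (univ : Finset V).diag ∪ {p ∈ (univ : Finset V).offDiag | c p.1 = c p.2} := by
    rw [hSdef, ← Finset.diag_union_offDiag, Finset.filter_union, Finset.filter_true_of_mem]
    intro p hp
    rw [(Finset.mem_diag.1 hp).2]
  rw [← hS, hsplit, Finset.card_union_of_disjoint
      ((Finset.disjoint_diag_offDiag _).mono_right (Finset.filter_subset _ _)),
    Finset.diag_card, Finset.card_univ, monoPairs, add_comm]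

lemma exists_perm_monoW_le (w : V → V → ℝ) (hdiag : ∀ v, w v v = 0) (c : V → ι) :
    ∃ σ : Equiv.Perm V, (Fintype.card V : ℝ) * (Fintype.card V - 1) * monoW w (c ∘ σ)
      ≤ monoPairs c * (2 * totalW w) := by
  have hpair (u v : V) : (#(univ : Finset V).offDiag : ℝ) *
      ∑ σ : Equiv.Perm V, (if c (σ u) = c (σ v) then w u v else 0)
        = (Fintype.card V).factorial * (monoPairs c * w u v) := by
    rcases eq_or_ne u v with rfl | huv
    · simp [hdiag]
    · have h := Equiv.Perm.card_offDiag_nsmul_sum_apply_pair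
        (fun a b => if c a = c b then w u v else 0) huv
      have hcount : ∑ p ∈ (univ : Finset V).offDiag, (if c p.1 = c p.2 then w u v else 0)
          = monoPairs c * w u v := by
        rw [← Finset.sum_filter, Finset.sum_const, nsmul_eq_mul, monoPairs]
      rwa [hcount, nsmul_eq_mul, nsmul_eq_mul] at h
  have havg : ∑ σ : Equiv.Perm V, (#(univ : Finset V).offDiag : ℝ) * monoW w (c ∘ σ)
      = ∑ _σ : Equiv.Perm V, (monoPairs c : ℝ) * ∑ u, ∑ v, w u v := by
    calc ∑ σ : Equiv.Perm V, (#(univ : Finset V).offDiag : ℝ) * monoW w (c ∘ σ)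
        = ∑ u, ∑ v, (#(univ : Finset V).offDiag : ℝ) *
            ∑ σ : Equiv.Perm V, (if c (σ u) = c (σ v) then w u v else 0) := by
          simp only [monoW, Function.comp_apply, Finset.mul_sum]
          rw [Finset.sum_comm]
          exact Finset.sum_congr rfl fun u _ => Finset.sum_comm
      _ = ∑ _σ : Equiv.Perm V, (monoPairs c : ℝ) * ∑ u, ∑ v, w u v := by
          simp only [hpair, ← Finset.mul_sum, Finset.sum_const, Finset.card_univ,
            Fintype.card_perm, nsmul_eq_mul]
          ring
  have hoff : (#(univ : Finset V).offDiag : ℝ) = Fintype.card V * (Fintype.card V - 1) := by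
    rw [Finset.offDiag_card, Finset.card_univ, Nat.cast_sub (Nat.le_mul_self _)]
    push_cast
    ring
  obtain ⟨σ, -, hσ⟩ := Finset.exists_le_of_sum_le univ_nonempty havg.le
  refine ⟨σ, ?_⟩
  rwa [← hoff, totalW, mul_div_cancel₀ _ two_ne_zero]

end Averaging

lemma card_filter_fin_mod_eq (n : ℕ) {k : ℕ} (hk : 0 < k) {i : ℕ} (hi : i < k) :
    #{x : Fin n | (x : ℕ) % k = i} = n / k + if i < n % k then 1 else 0 := by
  rw [← Nat.mod_eq_of_lt hi, ← Nat.count_modEq_card n hk i, Nat.count_eq_card_filter_range,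
    ← card_map Fin.valEmbedding, map_filter', Fin.map_valEmbedding_univ, Nat.Iio_eq_range]
  congr 1
  refine Finset.filter_congr fun x hx => ⟨?_, fun h => ⟨⟨x, mem_range.1 hx⟩, h, rfl⟩⟩
  rintro ⟨a, h, rfl⟩
  exact h

lemma exists_balanced_colouring (V : Type) [Fintype V] {k : ℕ} (hk : 0 < k) :
    ∃ c : V → Fin k, ∀ i, #{v | c v = i} = Fintype.card V / k ∨
      #{v | c v = i} = Fintype.card V / k + 1 := by
  refine ⟨fun v => ⟨Fintype.equivFin V v % k, Nat.mod_lt _ hk⟩, fun i => ?_⟩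
  have hcard : #{v | (⟨Fintype.equivFin V v % k, Nat.mod_lt _ hk⟩ : Fin k) = i}
      = #{x : Fin (Fintype.card V) | (x : ℕ) % k = i} :=
    Finset.card_equiv (Fintype.equivFin V) (by simp [Fin.ext_iff])
  rw [hcard, card_filter_fin_mod_eq _ hk i.isLt]
  split_ifs <;> simp

lemma four_mul_sum_sq_add_one_le {ι : Type} [Fintype ι] (hodd : Odd (Fintype.card ι))
    (s : ι → ℕ) (q : ℕ) (hs : ∀ i, s i = q ∨ s i = q + 1) :
    4 * Fintype.card ι * ∑ i, s i ^ 2 + 1 ≤ 4 * (∑ i, s i) ^ 2 + Fintype.card ι ^ 2 := by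
  set k := Fintype.card ι
  set n := ∑ i, s i
  have hsq : ∑ i, (s i ^ 2 : ℤ) = (2 * q + 1) * n - k * (q * (q + 1)) := by
    have hterm (i : ι) : (s i ^ 2 : ℤ) = (2 * q + 1) * s i - q * (q + 1) := by
      rcases hs i with h | h <;> rw [h] <;> push_cast <;> ring
    simp only [hterm, Finset.sum_sub_distrib, ← Finset.mul_sum, Finset.sum_const, Finset.card_univ,
      nsmul_eq_mul, n]
    push_cast
    ring
  have hdefect : Odd (2 * (n : ℤ) - (2 * q + 1) * k) := by
    refine Even.sub_odd (even_two_mul _) (Odd.mul (odd_two_mul_add_one _) ?_)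
    exact_mod_cast hodd
  have hone : 1 ≤ (2 * (n : ℤ) - (2 * q + 1) * k) ^ 2 :=
    (one_le_sq_iff_one_le_abs _).mpr (Int.one_le_abs fun h => by simp [h] at hdefect)
  zify
  linear_combination 4 * k * hsq + hone

lemma lower_bound_le_sub_half {K N M S W : ℝ} (hK : 0 < K) (hN : 2 ≤ N) (hW : 0 ≤ W)
    (hS : N * (N - 1) * S ≤ M * (2 * W)) (hM : 4 * K * (M + N) + 1 ≤ 4 * N ^ 2 + K ^ 2) :
    (K - 1) / K * W + (K - 1) / (2 * K) * (1 - (K - 3) / (4 * (N - 1))) * (2 * W / N)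
      ≤ W - S / 2 := by
  have hN1 : 0 < N - 1 := by linarith
  have hS' : S / 2 ≤ M * W / (N * (N - 1)) := by
    rw [le_div_iff₀ (by positivity)]
    linarith
  have hslack : 0 ≤ W * (4 * N ^ 2 + K ^ 2 - 4 * K * (M + N) - 1) / (4 * K * N * (N - 1)) :=
    div_nonneg (mul_nonneg hW (by linarith)) (by positivity)
  have hsplit : (K - 1) / K * W + (K - 1) / (2 * K) * (1 - (K - 3) / (4 * (N - 1))) * (2 * W / N)
      = W - M * W / (N * (N - 1))
        - W * (4 * N ^ 2 + K ^ 2 - 4 * K * (M + N) - 1) / (4 * K * N * (N - 1)) := by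
    field_simp
    ring
  linarith

theorem stmt12_general (k : ℕ) (hko : Odd k) (hk : 3 ≤ k) (V : Type) [Fintype V] [DecidableEq V]
    (hcard : k ≤ Fintype.card V) (w : V → V → ℝ)
    (hnn : ∀ u v, 0 ≤ w u v) (hdiag : ∀ v, w v v = 0) :
    ∃ X : Fin k → Finset V, IsPartition X ∧
      kcutW w X ≥ ((k : ℝ) - 1) / k * totalW w +
        ((k : ℝ) - 1) / (2 * k) *
          (1 - ((k : ℝ) - 3) / (4 * ((Fintype.card V : ℝ) - 1))) *
          (2 * totalW w / (Fintype.card V : ℝ)) := by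
  obtain ⟨c, hc⟩ := exists_balanced_colouring V (k := k) (by omega)
  have hsurj : Function.Surjective c := by
    intro i
    have hpos : 0 < #{v | c v = i} := by
      have hq := Nat.div_pos hcard (by omega : 0 < k)
      rcases hc i with h | h <;> omega
    obtain ⟨v, hv⟩ := Finset.card_pos.1 hpos
    exact ⟨v, (Finset.mem_filter.1 hv).2⟩
  obtain ⟨σ, hσ⟩ := exists_perm_monoW_le w hdiag c
  have hmono := four_mul_sum_sq_add_one_le (by simpa using hko) _ _ hc
  rw [Fintype.card_fin, ← monoPairs_add_card, ← Finset.card_univ,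
    ← Finset.card_eq_sum_card_fiberwise fun _ _ => mem_univ _] at hmono
  refine ⟨_, isPartition_fibres (hsurj.comp σ.surjective), ?_⟩
  rw [kcutW_fibres, ge_iff_le]
  refine lower_bound_le_sub_half (by positivity) ?_ ?_ hσ ?_
  · exact_mod_cast (by omega : 2 ≤ Fintype.card V)
  · exact div_nonneg (Finset.sum_nonneg fun u _ => Finset.sum_nonneg fun v _ => hnn u v) zero_le_two
  · exact_mod_cast hmono

theorem stmt12 (k : ℕ) (hko : Odd k) (hk : 3 ≤ k) (V : Type) [Fintype V] [DecidableEq V]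
    (hcard : k ≤ Fintype.card V) (w : V → V → ℝ)
    (hsym : ∀ u v, w u v = w v u) (hnn : ∀ u v, 0 ≤ w u v) (hdiag : ∀ v, w v v = 0) :
    ∃ X : Fin k → Finset V, IsPartition X ∧
      kcutW w X ≥ ((k : ℝ) - 1) / k * totalW w +
        ((k : ℝ) - 1) / (2 * k) *
          (1 - ((k : ℝ) - 3) / (4 * ((Fintype.card V : ℝ) - 1))) *
          (2 * totalW w / (Fintype.card V : ℝ)) :=
  stmt12_general k hko hk V hcard w hnn hdiag
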